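/- arXiv:2409.19532 — 2 statements merged into one kernel-verified Lean document; each statement's English description precedes it below -/
import Mathlib

section
/- Let p, q be probability vectors on {1,…,n} with ‖p − q‖₁ ≤ 2D for some D > 0. Define z = (1/2)‖p − q‖₁ − (1 − ‖q‖₂²) and z̃_E = 1 − ⟨p, q⟩ − 2(1 − ‖p‖₂²). Then |z − z̃_E| ≤ 4D. -/
/-- If `‖p - q‖₁ ≤ 2D` then `|z - z̃_E| ≤ 4D`, where
`z = (1/2)‖p-q‖₁ - (1 - ‖q‖₂²)` and `z̃_E = 1 - ⟨p,q⟩ - 2(1 - ‖p‖₂²)`. -/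
theorem z_approx_bound (n : ℕ) (p q : Fin n → ℝ) (D : ℝ)
    (hp : ∀ i, 0 ≤ p i) (hq : ∀ i, 0 ≤ q i)
    (hps : ∑ i, p i = 1) (hqs : ∑ i, q i = 1)
    (hD : 0 < D) (hpq : ∑ i, |p i - q i| ≤ 2 * D) :
    |((1 / 2) * ∑ i, |p i - q i| - (1 - ∑ i, (q i) ^ 2)) -
      (1 - (∑ i, p i * q i) - 2 * (1 - ∑ i, (p i) ^ 2))| ≤ 4 * D := by
  set L := ∑ i, |p i - q i| with hL
  have hLnn : 0 ≤ L := Finset.sum_nonneg fun i _ => abs_nonneg _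
  have hp1 : ∀ i, p i ≤ 1 := fun i => by
    have := Finset.single_le_sum (fun j _ => hp j) (Finset.mem_univ i)
    linarith [hps ▸ this]
  have hq1 : ∀ i, q i ≤ 1 := fun i => by
    have := Finset.single_le_sum (fun j _ => hq j) (Finset.mem_univ i)
    linarith [hqs ▸ this]
  set S := ∑ i, (q i - p i) * (q i + 2 * p i - 3/2) with hSdef
  have hSbound : |S| ≤ (3/2) * L := by
    calc |S| ≤ ∑ i, |(q i - p i) * (q i + 2 * p i - 3/2)| :=
          Finset.abs_sum_le_sum_abs _ _
      _ ≤ ∑ i, (3/2) * |p i - q i| := by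
          apply Finset.sum_le_sum
          intro i _
          rw [abs_mul, abs_sub_comm]
          have h2 : |q i + 2 * p i - 3/2| ≤ 3/2 := by
            rw [abs_le]
            constructor <;> nlinarith [hp i, hq i, hp1 i, hq1 i]
          calc |p i - q i| * |q i + 2 * p i - 3/2| ≤ |p i - q i| * (3/2) := by
                exact mul_le_mul_of_nonneg_left h2 (abs_nonneg _)
            _ = (3/2) * |p i - q i| := by ring
      _ = (3/2) * L := by rw [hL, Finset.mul_sum]
  have hdiff : ∑ i, (q i - p i) = 0 := by
    rw [Finset.sum_sub_distrib, hps, hqs]; ring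
  have hSval : S = ∑ i, (q i)^2 + ∑ i, p i * q i - 2 * ∑ i, (p i)^2 := by
    have h1 : S = (∑ i, ((q i)^2 + p i * q i - 2 * (p i)^2))
        - (3/2) * ∑ i, (q i - p i) := by
      rw [hSdef, Finset.mul_sum, ← Finset.sum_sub_distrib]
      apply Finset.sum_congr rfl
      intro i _; ring
    rw [h1, hdiff]
    have h2 : ∑ i, ((q i)^2 + p i * q i - 2 * (p i)^2)
        = ∑ i, (q i)^2 + ∑ i, p i * q i - 2 * ∑ i, (p i)^2 := by
      rw [Finset.sum_sub_distrib, Finset.sum_add_distrib, Finset.mul_sum]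
    rw [h2]; ring
  have hid : ((1 / 2) * L - (1 - ∑ i, (q i) ^ 2)) -
      (1 - (∑ i, p i * q i) - 2 * (1 - ∑ i, (p i) ^ 2)) = (1/2) * L + S := by
    rw [hSval]; ring
  rw [hid]
  have h3 := abs_le.mp hSbound
  rw [abs_le]
  constructor <;> [linarith [h3.1]; linarith [h3.2]]
end

section
/- Define f: ℝ → ℝ by f(z) = 0 for z < −1/(2λ), f(z) = λz + 1/2 for |z| ≤ 1/(2λ), and f(z) = 1 for z > 1/(2λ), where λ > 0. Let 𝟙[z] = 1 if z ≥ 0 and 0 otherwise. Then for all z ∈ ℝ, (𝟙[z] − f(z))·z ≤ 1/(16λ). -/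
/-- Error from smooth approximation of the indicator:
`(𝟙[z] - f(z)) · z ≤ 1/(16λ)` for the piecewise-linear ramp `f`. -/
theorem smooth_indicator_error (l : ℝ) (hl : 0 < l) (f : ℝ → ℝ)
    (hf0 : ∀ z : ℝ, z < -(1 / (2 * l)) → f z = 0)
    (hfm : ∀ z : ℝ, |z| ≤ 1 / (2 * l) → f z = l * z + 1 / 2)
    (hf1 : ∀ z : ℝ, 1 / (2 * l) < z → f z = 1) :
    ∀ z : ℝ, ((if 0 ≤ z then (1 : ℝ) else 0) - f z) * z ≤ 1 / (16 * l) := by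
  intro z
  have hpos : (0:ℝ) < 1 / (2 * l) := by positivity
  have hgoal : (0:ℝ) ≤ 1 / (16 * l) := by positivity
  rcases lt_or_ge z (-(1 / (2 * l))) with h | h
  · have hz : ¬ (0 ≤ z) := by linarith
    rw [hf0 z h, if_neg hz]
    simpa using hgoal
  · rcases le_or_gt z (1 / (2 * l)) with h2 | h2
    · rw [hfm z (abs_le.mpr ⟨by linarith, h2⟩)]
      rw [le_div_iff₀ (by positivity : (0:ℝ) < 16 * l)]
      split_ifs with hz
      · nlinarith [sq_nonneg (4 * l * z - 1), hl]
      · nlinarith [sq_nonneg (4 * l * z + 1), hl]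
    · have hz : 0 ≤ z := by linarith
      rw [hf1 z h2, if_pos hz]
      simpa using hgoal
end
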